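/- Let q ≥ 2, let G be a finite connected (q+1)-regular graph, and let k ≥ 1. Then for every K ∈ H_k one has | ‖K̂_G‖²_HSN − ‖K‖²_{H_k} | ≤ τ̃(k)² ‖K‖²_sup · (1/|V|) #{x ∈ V : ρ(x) ≤ k}. -/

import Mathlib

open Classical Finset

noncomputable section

def IsNB {V : Type} (G : SimpleGraph V) {k : ℕ} (ω : Fin (k + 1) → V) : Prop :=
  (∀ i j : Fin (k + 1), (j : ℕ) = (i : ℕ) + 1 → G.Adj (ω i) (ω j)) ∧
  (∀ i j : Fin (k + 1), (j : ℕ) = (i : ℕ) + 2 → ω i ≠ ω j)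

def nbFinset {V : Type} [Fintype V] (G : SimpleGraph V) (k : ℕ) :
    Finset (Fin (k + 1) → V) :=
  Finset.univ.filter fun ω => IsNB G ω

def RegularOfDegree {V : Type} [Fintype V] (G : SimpleGraph V) (d : ℕ) : Prop :=
  ∀ x : V, (Finset.univ.filter fun y => G.Adj x y).card = d

def ballHasCycle {V : Type} (G : SimpleGraph V) (x : V) (r : ℕ) : Prop :=
  ∃ (y : V) (w : G.Walk y y), w.IsCycle ∧ ∀ v ∈ w.support, G.dist x v ≤ r

def hNormSq {V : Type} [Fintype V] (G : SimpleGraph V) (k : ℕ)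
    (K : (Fin (k + 1) → V) → ℂ) : ℝ :=
  (1 / (Fintype.card V : ℝ)) * ∑ ω ∈ nbFinset G k, ‖K ω‖ ^ 2

/-- The sup-norm `‖K‖_sup = max_{ω ∈ B_k} |K(ω)|`. -/
def supNorm {V : Type} [Fintype V] (G : SimpleGraph V) (k : ℕ)
    (K : (Fin (k + 1) → V) → ℂ) : ℝ :=
  (((nbFinset G k).sup fun ω => ‖K ω‖₊ : NNReal) : ℝ)

def kernelG {V : Type} [Fintype V] (G : SimpleGraph V) (k : ℕ)
    (K : (Fin (k + 1) → V) → ℂ) (x y : V) : ℂ :=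
  ∑ ω ∈ (nbFinset G k).filter fun ω => ω 0 = x ∧ ω (Fin.last k) = y, K ω

def hsnNormSq {V : Type} [Fintype V] (G : SimpleGraph V) (k : ℕ)
    (K : (Fin (k + 1) → V) → ℂ) : ℝ :=
  (1 / (Fintype.card V : ℝ)) * ∑ x : V, ∑ y : V, ‖kernelG G k K x y‖ ^ 2

/-- `τ̃(k) = 1 + (q+1) ∑_{1 ≤ j ≤ k} q^{j-1}`, the cardinality of a ball of radius `k` in the
`(q+1)`-regular tree. -/
def ttau (q k : ℕ) : ℕ :=
  1 + (q + 1) * ∑ j ∈ Finset.range k, q ^ j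

/-! Expanding `‖K̂_G‖²_HSN` gives a sum of `K(ω) · conj K(ω')` over pairs of non-backtracking
paths with common endpoints. The diagonal pairs give `‖K‖²_{H_k}`, so the difference is a sum over
pairs of distinct such paths, each term at most `‖K‖²_sup`. In a forest, non-backtracking walks are
paths and a path is determined by its endpoints. Both paths of such a pair stay in the ball of
radius `k` around their common start `x`, so that ball cannot induce a forest: it contains a cycle.
As at most `τ̃(k)` non-backtracking paths of length `k` start at `x`, there are at most
`τ̃(k)² #{x : ρ(x) ≤ k}` such pairs. -/

open SimpleGraph

namespace IsNB

variable {V : Type} {G : SimpleGraph V} {k : ℕ} {ω : Fin (k + 1) → V}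

theorem isChain_ofFn (h : IsNB G ω) : (List.ofFn ω).IsChain G.Adj :=
  List.isChain_ofFn.mpr fun _ _ => h.1 _ _ rfl

def walk (h : IsNB G ω) : G.Walk (ω 0) (ω (Fin.last k)) :=
  (Walk.ofSupport (List.ofFn ω) (by simp) h.isChain_ofFn).copy (by simp)
    (List.getLast_ofFn _)

theorem length_walk (h : IsNB G ω) : h.walk.length = k := by
  rw [walk, Walk.length_copy, Walk.length_ofSupport, List.length_ofFn, Nat.add_sub_cancel]

theorem getVert_walk (h : IsNB G ω) (i : Fin (k + 1)) : h.walk.getVert i = ω i := by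
  rw [Walk.getVert_eq_support_getElem _ (by simp [length_walk]; omega)]
  simp only [walk, Walk.support_copy, Walk.support_ofSupport, List.getElem_ofFn]

theorem isPath_walk (hG : G.IsAcyclic) (h : IsNB G ω) : h.walk.IsPath := by
  rw [hG.isPath_iff_isChain, List.isChain_iff_getElem]
  intro i hi
  simp only [Walk.length_edges, length_walk] at hi
  rw [Walk.getElem_edges, Walk.getElem_edges, ne_eq, Sym2.eq_iff]
  have h0 := getVert_walk h ⟨i, by omega⟩
  have h1 := getVert_walk h ⟨i + 1, by omega⟩
  have h2 := getVert_walk h ⟨i + 2, by omega⟩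
  simp only at h0 h1 h2
  rw [h0, h1, add_assoc, h2]
  rintro (⟨hi0, -⟩ | ⟨hi2, -⟩)
  · exact (h.1 ⟨i, by omega⟩ ⟨i + 1, by omega⟩ rfl).ne hi0
  · exact h.2 ⟨i, by omega⟩ ⟨i + 2, by omega⟩ rfl hi2

theorem eq_of_isAcyclic (hG : G.IsAcyclic) {ω' : Fin (k + 1) → V} (h : IsNB G ω)
    (h' : IsNB G ω') (h0 : ω 0 = ω' 0) (hl : ω (Fin.last k) = ω' (Fin.last k)) : ω = ω' := by
  have hpaths := (hG.subsingleton_path _ _).elim ⟨h.walk, h.isPath_walk hG⟩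
    ⟨h'.walk.copy h0.symm hl.symm, by simpa using h'.isPath_walk hG⟩
  funext i
  rw [← h.getVert_walk, ← h'.getVert_walk]
  have := congrArg (fun p : G.Path _ _ => p.1.getVert i) hpaths
  simpa using this

theorem dist_le (h : IsNB G ω) (i : Fin (k + 1)) : G.dist (ω 0) (ω i) ≤ i := by
  have := SimpleGraph.dist_le (h.walk.take i)
  rw [Walk.take_length, h.getVert_walk] at this
  omega

theorem init {ω : Fin (k + 2) → V} (h : IsNB G ω) : IsNB G (Fin.init ω) :=
  ⟨fun i j hij => h.1 _ _ (by simpa using hij), fun i j hij => h.2 _ _ (by simpa using hij)⟩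

theorem induce (h : IsNB G ω) {s : Set V} (hs : ∀ i, ω i ∈ s) :
    IsNB (G.induce s) (fun i => ⟨ω i, hs i⟩) :=
  ⟨fun i j hij => by simpa using h.1 i j hij,
    fun i j hij he => h.2 i j hij (congrArg Subtype.val he)⟩

end IsNB

section Ball

variable {V : Type} {G : SimpleGraph V}

theorem ballHasCycle.mono {x : V} {r r' : ℕ} (h : ballHasCycle G x r) (hr : r ≤ r') :
    ballHasCycle G x r' :=
  let ⟨y, w, hw, hball⟩ := h
  ⟨y, w, hw, fun v hv => (hball v hv).trans hr⟩

theorem isAcyclic_induce_of_not_ballHasCycle {x : V} {r : ℕ} (h : ¬ ballHasCycle G x r) :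
    (G.induce {v | G.dist x v ≤ r}).IsAcyclic := by
  intro v c hc
  refine h ⟨v, c.map (Embedding.induce _).toHom, hc.map Subtype.val_injective, fun u hu => ?_⟩
  obtain ⟨u', -, rfl⟩ := List.mem_map.mp (Walk.support_map _ c ▸ hu)
  exact u'.2

theorem ballHasCycle_of_isNB_ne {k : ℕ} {ω ω' : Fin (k + 1) → V} (h : IsNB G ω)
    (h' : IsNB G ω') (h0 : ω 0 = ω' 0) (hl : ω (Fin.last k) = ω' (Fin.last k)) (hne : ω ≠ ω') :
    ballHasCycle G (ω 0) k := by
  by_contra hball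
  have hmem : ∀ i, ω i ∈ {v | G.dist (ω 0) v ≤ k} := fun i => (h.dist_le i).trans i.is_le
  have hmem' : ∀ i, ω' i ∈ {v | G.dist (ω 0) v ≤ k} := fun i =>
    h0 ▸ (h'.dist_le i).trans i.is_le
  have := (h.induce hmem).eq_of_isAcyclic (isAcyclic_induce_of_not_ballHasCycle hball)
    (h'.induce hmem') (Subtype.ext h0) (Subtype.ext hl)
  exact hne (funext fun i => congrArg Subtype.val (congrFun this i))

end Ball

section Counting

variable {V : Type} [Fintype V] {G : SimpleGraph V} {q : ℕ}

def nbFrom (G : SimpleGraph V) (k : ℕ) (x : V) : Finset (Fin (k + 1) → V) :=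
  (nbFinset G k).filter fun ω => ω 0 = x

theorem mem_nbFrom {k : ℕ} {x : V} {ω : Fin (k + 1) → V} :
    ω ∈ nbFrom G k x ↔ IsNB G ω ∧ ω 0 = x := by
  simp [nbFrom, nbFinset]

theorem card_nbFrom_zero_le (x : V) : #(nbFrom G 0 x) ≤ 1 :=
  Finset.card_le_one.mpr fun ω hω ω' hω' => funext fun i => by
    rw [Fin.fin_one_eq_zero i, (mem_nbFrom.mp hω).2, (mem_nbFrom.mp hω').2]

theorem card_nbFrom_one_le (hreg : RegularOfDegree G (q + 1)) (x : V) :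
    #(nbFrom G 1 x) ≤ q + 1 := by
  rw [← hreg x]
  refine Finset.card_le_card_of_injOn (fun ω => ω 1) (fun ω hω => ?_) fun ω hω ω' hω' h1 => ?_
  · obtain ⟨h, rfl⟩ := mem_nbFrom.mp hω
    simpa using h.1 0 1 rfl
  · funext i
    fin_cases i
    · exact (mem_nbFrom.mp hω).2.trans (mem_nbFrom.mp hω').2.symm
    · exact h1

/-- An extension is determined by its new vertex, a neighbour of the old endpoint other than the
previous vertex. -/
theorem card_filter_init_eq_le (hreg : RegularOfDegree G (q + 1)) {m : ℕ}
    {ρ : Fin (m + 2) → V} (hρ : IsNB G ρ) :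
    #((nbFinset G (m + 2)).filter fun ω => Fin.init ω = ρ) ≤ q := by
  set prev := ρ (Fin.last m).castSucc
  set tip := ρ (Fin.last (m + 1))
  have hprev : prev ∈ Finset.univ.filter (G.Adj tip) := by
    simpa using (hρ.1 _ _ (by simp)).symm
  calc _ ≤ #((Finset.univ.filter (G.Adj tip)).erase prev) := by
        refine Finset.card_le_card_of_injOn (fun ω => ω (Fin.last (m + 2))) (fun ω hω => ?_)
          fun ω hω ω' hω' hlast => ?_
        · simp only [Finset.coe_filter, nbFinset, Finset.mem_filter, Finset.mem_univ,
            true_and, Set.mem_ofPred_eq] at hω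
          obtain ⟨h, rfl⟩ := hω
          simp only [Finset.coe_erase, Finset.coe_filter, Finset.mem_univ, true_and,
            Set.mem_sdiff, Set.mem_ofPred_eq, Set.mem_singleton_iff]
          exact ⟨h.1 _ _ (by simp), (h.2 _ _ (by simp)).symm⟩
        · simp only [Finset.coe_filter, Set.mem_ofPred_eq] at hω hω'
          rw [← Fin.snoc_init_self ω, ← Fin.snoc_init_self ω', hω.2, hω'.2]
          exact congrArg _ hlast
    _ = q := by
        rw [Finset.card_erase_of_mem hprev, hreg]
        rfl

theorem card_nbFrom_succ_le (hreg : RegularOfDegree G (q + 1)) (m : ℕ) (x : V) :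
    #(nbFrom G (m + 2) x) ≤ q * #(nbFrom G (m + 1) x) := by
  have hinit : ∀ ω ∈ nbFrom G (m + 2) x, Fin.init ω ∈ nbFrom G (m + 1) x := by
    intro ω hω
    obtain ⟨h, h0⟩ := mem_nbFrom.mp hω
    exact mem_nbFrom.mpr ⟨h.init, h0⟩
  refine Finset.card_le_mul_card_image_of_maps_to hinit q fun ρ hρ => ?_
  exact (Finset.card_le_card (Finset.filter_subset_filter _ (Finset.filter_subset _ _))).trans
    (card_filter_init_eq_le hreg (mem_nbFrom.mp hρ).1)

theorem mul_ttau_le_ttau_succ (q k : ℕ) : q * ttau q k ≤ ttau q (k + 1) := by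
  simp only [ttau, Finset.sum_range_succ', pow_succ, ← Finset.sum_mul, pow_zero]
  nlinarith

theorem card_nbFrom_le_ttau (hreg : RegularOfDegree G (q + 1)) (x : V) :
    ∀ k, #(nbFrom G k x) ≤ ttau q k
  | 0 => by simpa [ttau] using card_nbFrom_zero_le x
  | 1 => (card_nbFrom_one_le hreg x).trans (by simp [ttau])
  | m + 2 => calc
      #(nbFrom G (m + 2) x) ≤ q * #(nbFrom G (m + 1) x) := card_nbFrom_succ_le hreg m x
      _ ≤ q * ttau q (m + 1) := Nat.mul_le_mul_left q (card_nbFrom_le_ttau hreg x (m + 1))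
      _ ≤ ttau q (m + 2) := mul_ttau_le_ttau_succ q (m + 1)

end Counting

section FiberwiseSums

open ComplexConjugate

variable {ι α : Type*} [Fintype α] [DecidableEq α]

theorem norm_sq_sum_eq_sum_product (t : Finset ι) (K : ι → ℂ) :
    ‖∑ i ∈ t, K i‖ ^ 2 = ∑ p ∈ t ×ˢ t, (K p.1 * conj (K p.2)).re := by
  rw [← Complex.normSq_eq_norm_sq, ← Complex.ofReal_re (Complex.normSq _), ← Complex.mul_conj,
    map_sum, Finset.sum_mul_sum, ← Finset.sum_product', Complex.re_sum]

theorem sum_norm_sq_sum_fiberwise (s : Finset ι) (f : ι → α) (K : ι → ℂ) :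
    ∑ a, ‖∑ i ∈ s with f i = a, K i‖ ^ 2
      = ∑ p ∈ s ×ˢ s with f p.1 = f p.2, (K p.1 * conj (K p.2)).re := by
  rw [← Finset.sum_fiberwise _ (fun p : ι × ι => f p.1)]
  refine Finset.sum_congr rfl fun a _ => ?_
  have hfiber : {p ∈ {p ∈ s ×ˢ s | f p.1 = f p.2} | f p.1 = a}
      = {i ∈ s | f i = a} ×ˢ {i ∈ s | f i = a} := by
    ext p
    simp only [Finset.mem_filter, Finset.mem_product]
    constructor
    · rintro ⟨⟨⟨h1, h2⟩, h12⟩, rfl⟩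
      exact ⟨⟨h1, rfl⟩, h2, h12.symm⟩
    · rintro ⟨⟨h1, rfl⟩, h2, h12⟩
      exact ⟨⟨⟨h1, h2⟩, h12.symm⟩, rfl⟩
  rw [hfiber, norm_sq_sum_eq_sum_product]

theorem abs_sum_norm_sq_sum_fiberwise_sub_le (s : Finset ι) (f : ι → α) (K : ι → ℂ) {M : ℝ}
    (hM : ∀ i ∈ s, ‖K i‖ ≤ M) :
    |∑ a, ‖∑ i ∈ s with f i = a, K i‖ ^ 2 - ∑ i ∈ s, ‖K i‖ ^ 2|
      ≤ M ^ 2 * #{p ∈ s.offDiag | f p.1 = f p.2} := by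
  set g : ι × ι → ℝ := fun p => (K p.1 * conj (K p.2)).re
  have hdiag : ∑ p ∈ s.diag with f p.1 = f p.2, g p = ∑ i ∈ s, ‖K i‖ ^ 2 := by
    rw [Finset.filter_true_of_mem fun p hp => congrArg f (Finset.mem_diag.mp hp).2,
      Finset.sum_diag]
    refine Finset.sum_congr rfl fun i _ => ?_
    rw [show g (i, i) = (K i * conj (K i)).re from rfl, Complex.mul_conj, Complex.ofReal_re,
      Complex.normSq_eq_norm_sq]
  have hbound : ∀ p ∈ s.offDiag, |g p| ≤ M ^ 2 := by
    intro p hp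
    obtain ⟨h1, h2, -⟩ := Finset.mem_offDiag.mp hp
    calc |g p| ≤ ‖K p.1‖ * ‖K p.2‖ := by
          simpa [g] using Complex.abs_re_le_norm (K p.1 * conj (K p.2))
      _ ≤ M * M := mul_le_mul (hM _ h1) (hM _ h2) (norm_nonneg _)
          ((norm_nonneg _).trans (hM _ h1))
      _ = M ^ 2 := (sq M).symm
  rw [sum_norm_sq_sum_fiberwise, ← s.diag_union_offDiag, Finset.filter_union,
    Finset.sum_union (s.disjoint_diag_offDiag.mono (Finset.filter_subset _ _)
      (Finset.filter_subset _ _)), hdiag, add_sub_cancel_left]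
  calc _ ≤ ∑ p ∈ s.offDiag with f p.1 = f p.2, |g p| := Finset.abs_sum_le_sum_abs _ _
    _ ≤ ∑ p ∈ s.offDiag with f p.1 = f p.2, M ^ 2 :=
        Finset.sum_le_sum fun p hp => hbound p (Finset.mem_filter.mp hp).1
    _ = M ^ 2 * #{p ∈ s.offDiag | f p.1 = f p.2} := by
        rw [Finset.sum_const, nsmul_eq_mul, mul_comm]

end FiberwiseSums

section Kernel

variable {V : Type} [Fintype V] {G : SimpleGraph V} {k : ℕ}

theorem sum_norm_sq_kernelG (K : (Fin (k + 1) → V) → ℂ) :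
    ∑ x, ∑ y, ‖kernelG G k K x y‖ ^ 2
      = ∑ e : V × V, ‖∑ ω ∈ nbFinset G k with (ω 0, ω (Fin.last k)) = e, K ω‖ ^ 2 := by
  simp only [Fintype.sum_prod_type, Prod.mk.injEq, kernelG]

theorem norm_le_supNorm {K : (Fin (k + 1) → V) → ℂ} {ω : Fin (k + 1) → V}
    (hω : ω ∈ nbFinset G k) : ‖K ω‖ ≤ supNorm G k K :=
  NNReal.coe_le_coe.mpr (Finset.le_sup (f := fun ω => ‖K ω‖₊) hω)

theorem card_offDiag_sameEnds_le {q : ℕ} (hreg : RegularOfDegree G (q + 1)) :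
    #{p ∈ (nbFinset G k).offDiag |
        (p.1 0, p.1 (Fin.last k)) = (p.2 0, p.2 (Fin.last k))}
      ≤ ttau q k ^ 2 * #{x | ballHasCycle G x (k + 1)} := by
  calc _ ≤ #(({x | ballHasCycle G x (k + 1)} : Finset V).biUnion
          fun x => nbFrom G k x ×ˢ nbFrom G k x) := by
        refine Finset.card_le_card fun p hp => ?_
        simp only [Finset.mem_filter, Finset.mem_offDiag, Prod.mk.injEq, nbFinset,
          Finset.mem_univ, true_and] at hp
        obtain ⟨⟨h1, h2, hne⟩, h0, hl⟩ := hp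
        simp only [Finset.mem_biUnion, Finset.mem_filter, Finset.mem_univ, true_and,
          Finset.mem_product, mem_nbFrom]
        exact ⟨p.1 0, (ballHasCycle_of_isNB_ne h1 h2 h0 hl hne).mono (Nat.le_succ k),
          ⟨h1, rfl⟩, h2, h0.symm⟩
    _ ≤ ∑ x ∈ ({x | ballHasCycle G x (k + 1)} : Finset V), #(nbFrom G k x ×ˢ nbFrom G k x) :=
        Finset.card_biUnion_le
    _ ≤ ∑ x ∈ ({x | ballHasCycle G x (k + 1)} : Finset V), ttau q k ^ 2 := by
        refine Finset.sum_le_sum fun x _ => ?_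
        rw [Finset.card_product, sq]
        exact Nat.mul_le_mul (card_nbFrom_le_ttau hreg x k) (card_nbFrom_le_ttau hreg x k)
    _ = ttau q k ^ 2 * #{x | ballHasCycle G x (k + 1)} := by
        rw [Finset.sum_const, smul_eq_mul, mul_comm]

end Kernel

theorem hsn_norm_comparison_general
    (q : ℕ)
    (V : Type) [Fintype V] (G : SimpleGraph V)
    (hreg : RegularOfDegree G (q + 1))
    (k : ℕ) (K : (Fin (k + 1) → V) → ℂ) :
    |hsnNormSq G k K - hNormSq G k K|
      ≤ (ttau q k : ℝ) ^ 2 * supNorm G k K ^ 2 *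
        (((Finset.univ.filter fun x : V => ballHasCycle G x (k + 1)).card : ℝ)
          / (Fintype.card V : ℝ)) := by
  have hdiff : hsnNormSq G k K - hNormSq G k K = 1 / (Fintype.card V : ℝ) *
      (∑ e : V × V, ‖∑ ω ∈ nbFinset G k with (ω 0, ω (Fin.last k)) = e, K ω‖ ^ 2
        - ∑ ω ∈ nbFinset G k, ‖K ω‖ ^ 2) := by
    rw [hsnNormSq, hNormSq, sum_norm_sq_kernelG, mul_sub]
  have hcount : (#{p ∈ (nbFinset G k).offDiag |
        (p.1 0, p.1 (Fin.last k)) = (p.2 0, p.2 (Fin.last k))} : ℝ)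
      ≤ (ttau q k : ℝ) ^ 2 * #{x | ballHasCycle G x (k + 1)} := by
    exact_mod_cast card_offDiag_sameEnds_le hreg
  rw [hdiff, abs_mul, abs_of_nonneg (by positivity)]
  calc _ ≤ 1 / (Fintype.card V : ℝ) * (supNorm G k K ^ 2 * #{p ∈ (nbFinset G k).offDiag |
        (p.1 0, p.1 (Fin.last k)) = (p.2 0, p.2 (Fin.last k))}) := by
        gcongr
        exact abs_sum_norm_sq_sum_fiberwise_sub_le (nbFinset G k)
          (fun ω => (ω 0, ω (Fin.last k))) K fun ω hω => norm_le_supNorm hω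
    _ ≤ 1 / (Fintype.card V : ℝ) * (supNorm G k K ^ 2 *
        ((ttau q k : ℝ) ^ 2 * #{x | ballHasCycle G x (k + 1)})) := by gcongr
    _ = _ := by ring

/-- Proposition 2 (ii) of the paper:
`|‖K̂_G‖²_HSN − ‖K‖²_{H_k}| ≤ τ̃(k)² ‖K‖²_sup (1/|V|) #{x : ρ(x) ≤ k}`. -/
theorem hsn_norm_comparison
    (q : ℕ) (hq : 2 ≤ q)
    (V : Type) [Fintype V] (G : SimpleGraph V)
    (hconn : G.Connected) (hreg : RegularOfDegree G (q + 1))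
    (k : ℕ) (hk : 1 ≤ k) (K : (Fin (k + 1) → V) → ℂ) :
    |hsnNormSq G k K - hNormSq G k K|
      ≤ (ttau q k : ℝ) ^ 2 * supNorm G k K ^ 2 *
        (((Finset.univ.filter fun x : V => ballHasCycle G x (k + 1)).card : ℝ)
          / (Fintype.card V : ℝ)) :=
  hsn_norm_comparison_general q V G hreg k K

end
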